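/- arXiv:2512.02332 — 5 statements merged into one kernel-verified Lean document; each statement's English description precedes it below -/
import Mathlib

section
/- Let ε ∈ [0,1), U ≥ 1, and A be the (U+1)×(U+1) matrix with A(i,j) = ε^|i-j|. Let x be the vector with x(1) = x(U+1) = 1/(1+ε) and x(k) = (1-ε)/(1+ε) for 2 ≤ k ≤ U. Then A·x equals the all-ones vector, i.e., x = A⁻¹·e. -/
noncomputable def bmat (ε : ℝ) (U k j : ℕ) : ℝ :=
  if k = j then (if j = 0 ∨ j = U then 1 else 1 + ε ^ 2)
  else if k + 1 = j ∨ k = j + 1 then -ε else 0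

lemma key (U : ℕ) (hU : 1 ≤ U) (ε : ℝ) (i j : ℕ) (hi : i ≤ U) (hj : j ≤ U) :
    ∑ k ∈ Finset.range (U + 1), ε ^ ((i : ℤ) - k).natAbs * bmat ε U k j
      = if i = j then 1 - ε ^ 2 else 0 := by
  have hsplit : ∀ k ∈ Finset.range (U + 1),
      ε ^ ((i : ℤ) - k).natAbs * bmat ε U k j
      = (if k = j then (if j = 0 ∨ j = U then 1 else 1 + ε ^ 2) * ε ^ ((i : ℤ) - j).natAbs else 0)
      + (if k + 1 = j then -ε * ε ^ ((i : ℤ) - ((j : ℤ) - 1)).natAbs else 0)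
      + (if k = j + 1 then -ε * ε ^ ((i : ℤ) - ((j : ℤ) + 1)).natAbs else 0) := by
    intro k hk
    unfold bmat
    by_cases h1 : k = j
    · subst h1
      have h2 : ¬ (k + 1 = k) := by omega
      have h3 : ¬ (k = k + 1) := by omega
      rw [if_pos rfl, if_pos rfl, if_neg h2, if_neg h3]
      ring
    · by_cases h2 : k + 1 = j
      · have h3 : ¬ (k = j + 1) := by omega
        have he : ((i : ℤ) - k).natAbs = ((i : ℤ) - ((j : ℤ) - 1)).natAbs := by omega
        rw [if_neg h1, if_pos (Or.inl h2), if_neg h1, if_pos h2, if_neg h3, he]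
        ring
      · by_cases h3 : k = j + 1
        · have he : ((i : ℤ) - k).natAbs = ((i : ℤ) - ((j : ℤ) + 1)).natAbs := by omega
          rw [if_neg h1, if_pos (Or.inr h3), if_neg h1, if_neg h2, if_pos h3, he]
          ring
        · have hor : ¬ (k + 1 = j ∨ k = j + 1) := by omega
          rw [if_neg h1, if_neg hor, if_neg h1, if_neg h2, if_neg h3]
          ring
  rw [Finset.sum_congr rfl hsplit, Finset.sum_add_distrib, Finset.sum_add_distrib]
  rw [Finset.sum_ite_eq' (Finset.range (U+1)) j
    (fun _ => (if j = 0 ∨ j = U then 1 else 1 + ε ^ 2) * ε ^ ((i : ℤ) - j).natAbs)]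
  rw [Finset.sum_ite_eq' (Finset.range (U+1)) (j+1)
    (fun _ => -ε * ε ^ ((i : ℤ) - ((j : ℤ) + 1)).natAbs)]
  have hjm : ∑ k ∈ Finset.range (U + 1),
      (if k + 1 = j then -ε * ε ^ ((i : ℤ) - ((j : ℤ) - 1)).natAbs else 0)
      = if 1 ≤ j then -ε * ε ^ ((i : ℤ) - ((j : ℤ) - 1)).natAbs else 0 := by
    by_cases hj1 : 1 ≤ j
    · obtain ⟨m, rfl⟩ : ∃ m, j = m + 1 := ⟨j - 1, by omega⟩
      have he : ∀ k : ℕ, (k + 1 = m + 1) = (k = m) := fun k => by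
        apply propext; omega
      simp only [he]
      rw [Finset.sum_ite_eq' (Finset.range (U+1)) m
        (fun _ => -ε * ε ^ ((i : ℤ) - ((↑(m+1) : ℤ) - 1)).natAbs)]
      rw [if_pos (Finset.mem_range.mpr (by omega)), if_pos hj1]
    · rw [if_neg hj1]
      apply Finset.sum_eq_zero
      intro k _
      rw [if_neg (by omega)]
  rw [hjm, if_pos (Finset.mem_range.mpr (by omega))]
  by_cases hj0 : j = 0
  · subst hj0
    rw [if_pos (Or.inl rfl), if_neg (by omega : ¬ (1 ≤ 0)),
      if_pos (Finset.mem_range.mpr (by omega))]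
    by_cases hi0 : i = 0
    · have e0 : ((i : ℤ) - ((0:ℕ):ℤ)).natAbs = 0 := by omega
      have e1 : ((i : ℤ) - (((0:ℕ):ℤ) + 1)).natAbs = 1 := by omega
      rw [e0, e1, if_pos hi0]
      ring
    · set m := i - 1 with hm
      have e0 : ((i : ℤ) - ((0:ℕ):ℤ)).natAbs = m + 1 := by omega
      have e1 : ((i : ℤ) - (((0:ℕ):ℤ) + 1)).natAbs = m := by omega
      rw [e0, e1, if_neg hi0]
      ring
  · by_cases hjU : j = U
    · subst hjU
      rw [if_pos (Or.inr rfl), if_pos (by omega : 1 ≤ j),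
        if_neg (by simp [Finset.mem_range])]
      by_cases hiU : i = j
      · subst hiU
        have e0 : ((i : ℤ) - i).natAbs = 0 := by omega
        have e1 : ((i : ℤ) - ((i : ℤ) - 1)).natAbs = 1 := by omega
        rw [e0, e1, if_pos rfl]
        ring
      · have hij : i < j := by omega
        set m := j - 1 - i with hm
        have e0 : ((i : ℤ) - j).natAbs = m + 1 := by omega
        have e1 : ((i : ℤ) - ((j : ℤ) - 1)).natAbs = m := by omega
        rw [e0, e1, if_neg hiU]
        ring
    · rw [if_neg (by omega : ¬ (j = 0 ∨ j = U)), if_pos (by omega : 1 ≤ j),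
        if_pos (Finset.mem_range.mpr (by omega))]
      rcases lt_trichotomy i j with hij | hij | hij
      · set m := j - 1 - i with hm
        have e0 : ((i : ℤ) - j).natAbs = m + 1 := by omega
        have e1 : ((i : ℤ) - ((j : ℤ) - 1)).natAbs = m := by omega
        have e2 : ((i : ℤ) - ((j : ℤ) + 1)).natAbs = m + 2 := by omega
        rw [e0, e1, e2, if_neg (by omega)]
        ring
      · subst hij
        have e0 : ((i : ℤ) - i).natAbs = 0 := by omega
        have e1 : ((i : ℤ) - ((i : ℤ) - 1)).natAbs = 1 := by omega
        have e2 : ((i : ℤ) - ((i : ℤ) + 1)).natAbs = 1 := by omega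
        rw [e0, e1, e2, if_pos rfl]
        ring
      · set m := i - j - 1 with hm
        have e0 : ((i : ℤ) - j).natAbs = m + 1 := by omega
        have e1 : ((i : ℤ) - ((j : ℤ) - 1)).natAbs = m + 2 := by omega
        have e2 : ((i : ℤ) - ((j : ℤ) + 1)).natAbs = m := by omega
        rw [e0, e1, e2, if_neg (by omega)]
        ring
lemma rowsum (U : ℕ) (hU : 1 ≤ U) (ε : ℝ) (i : ℕ) (hi : i ≤ U) :
    ∑ j ∈ Finset.range (U + 1), bmat ε U i j
      = if i = 0 ∨ i = U then 1 - ε else (1 - ε) ^ 2 := by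
  have hsplit : ∀ j ∈ Finset.range (U + 1),
      bmat ε U i j
      = (if j = i then (if i = 0 ∨ i = U then 1 else 1 + ε ^ 2) else 0)
      + (if j = i + 1 then -ε else 0)
      + (if j + 1 = i then -ε else 0) := by
    intro j hj
    unfold bmat
    by_cases h1 : i = j
    · subst h1
      rw [if_pos rfl, if_pos rfl, if_neg (by omega : ¬ (i = i + 1)),
        if_neg (by omega : ¬ (i + 1 = i))]
      ring
    · by_cases h2 : i + 1 = j
      · rw [if_neg h1, if_pos (Or.inl h2), if_neg (by omega : ¬ (j = i)),
          if_pos (by omega : j = i + 1), if_neg (by omega : ¬ (j + 1 = i))]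
        ring
      · by_cases h3 : i = j + 1
        · rw [if_neg h1, if_pos (Or.inr h3), if_neg (by omega : ¬ (j = i)),
            if_neg (by omega : ¬ (j = i + 1)), if_pos (by omega : j + 1 = i)]
          ring
        · rw [if_neg h1, if_neg (by omega : ¬ (i + 1 = j ∨ i = j + 1)),
            if_neg (by omega : ¬ (j = i)), if_neg (by omega : ¬ (j = i + 1)),
            if_neg (by omega : ¬ (j + 1 = i))]
          ring
  rw [Finset.sum_congr rfl hsplit, Finset.sum_add_distrib, Finset.sum_add_distrib]
  rw [Finset.sum_ite_eq' (Finset.range (U+1)) i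
      (fun _ => (if i = 0 ∨ i = U then 1 else 1 + ε ^ 2))]
  rw [Finset.sum_ite_eq' (Finset.range (U+1)) (i+1) (fun _ => -ε)]
  have him : (∑ j ∈ Finset.range (U + 1), if j + 1 = i then -ε else 0)
      = if 1 ≤ i then -ε else 0 := by
    by_cases hi1 : 1 ≤ i
    · obtain ⟨m, rfl⟩ : ∃ m, i = m + 1 := ⟨i - 1, by omega⟩
      have he : ∀ j : ℕ, (j + 1 = m + 1) = (j = m) := fun j => by apply propext; omega
      simp only [he]
      rw [Finset.sum_ite_eq' (Finset.range (U+1)) m (fun _ => -ε),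
        if_pos (Finset.mem_range.mpr (by omega)), if_pos hi1]
    · rw [if_neg hi1]
      exact Finset.sum_eq_zero fun j _ => if_neg (by omega)
  rw [him, if_pos (Finset.mem_range.mpr (by omega))]
  by_cases hi0 : i = 0
  · rw [if_pos (Or.inl hi0), if_pos (Finset.mem_range.mpr (by omega)),
      if_neg (by omega), if_pos (Or.inl hi0)]
    ring
  · by_cases hiU : i = U
    · rw [if_pos (Or.inr hiU), if_neg (by simp [Finset.mem_range]; omega),
        if_pos (by omega), if_pos (Or.inr hiU)]
      ring
    · rw [if_neg (by omega : ¬ (i = 0 ∨ i = U)),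
        if_pos (Finset.mem_range.mpr (by omega)), if_pos (by omega),
        if_neg (by omega : ¬ (i = 0 ∨ i = U))]
      ring

theorem stmt_1 (U : ℕ) (hU : 1 ≤ U) (ε : ℝ) (hε0 : 0 ≤ ε) (hε1 : ε < 1)
    (A : Matrix (Fin (U + 1)) (Fin (U + 1)) ℝ)
    (hA : ∀ i j, A i j = ε ^ ((i.val : ℤ) - (j.val : ℤ)).natAbs)
    (x : Fin (U + 1) → ℝ)
    (hx : ∀ k : Fin (U + 1),
      x k = if k = 0 ∨ k = Fin.last U then 1 / (1 + ε) else (1 - ε) / (1 + ε)) :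
    A.mulVec x = (fun _ => 1) ∧ x = A⁻¹.mulVec (fun _ => 1) := by
  have hc : (1 : ℝ) - ε ^ 2 ≠ 0 := by nlinarith
  have hp : (1 : ℝ) + ε ≠ 0 := by nlinarith
  set Bm : Matrix (Fin (U + 1)) (Fin (U + 1)) ℝ :=
    Matrix.of (fun k j : Fin (U + 1) => bmat ε U k.val j.val / (1 - ε ^ 2)) with hBm
  have hAB : A * Bm = 1 := by
    ext i j
    rw [Matrix.mul_apply, Matrix.one_apply]
    have hterm : ∀ k : Fin (U + 1), A i k * Bm k j
        = (fun n : ℕ => ε ^ ((i.val : ℤ) - n).natAbs * bmat ε U n j.val / (1 - ε ^ 2)) k.val := by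
      intro k
      rw [hA, hBm]
      simp only [Matrix.of_apply]
      ring
    rw [Finset.sum_congr rfl (fun k _ => hterm k),
      Fin.sum_univ_eq_sum_range
        (fun n : ℕ => ε ^ ((i.val : ℤ) - n).natAbs * bmat ε U n j.val / (1 - ε ^ 2)) (U + 1),
      ← Finset.sum_div, key U hU ε i.val j.val (by omega) (by omega)]
    by_cases h : i = j
    · rw [if_pos (by rw [h]), if_pos h, div_self hc]
    · rw [if_neg (fun hv => h (Fin.ext hv)), if_neg h, zero_div]
  have hinv : A⁻¹ = Bm := Matrix.inv_eq_right_inv hAB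
  have hxB : x = Bm.mulVec (fun _ => 1) := by
    funext i
    rw [hx]
    have : Bm.mulVec (fun _ => 1) i
        = ∑ j ∈ Finset.range (U + 1), bmat ε U i.val j / (1 - ε ^ 2) := by
      rw [Matrix.mulVec, dotProduct]
      simp only [hBm, Matrix.of_apply, mul_one]
      exact Fin.sum_univ_eq_sum_range (fun n => bmat ε U i.val n / (1 - ε ^ 2)) (U + 1)
    rw [this, ← Finset.sum_div, rowsum U hU ε i.val (by omega)]
    have hcond : (i = 0 ∨ i = Fin.last U) ↔ (i.val = 0 ∨ i.val = U) := by
      rw [Fin.ext_iff, Fin.ext_iff]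
      simp [Fin.last]
    by_cases h : i.val = 0 ∨ i.val = U
    · rw [if_pos (hcond.mpr h), if_pos h]
      field_simp
      ring
    · rw [if_neg (fun hv => h (hcond.mp hv)), if_neg h]
      rw [div_eq_div_iff hp hc]
      ring
  refine ⟨?_, ?_⟩
  · rw [hxB, Matrix.mulVec_mulVec, hAB, Matrix.one_mulVec]
  · rw [hinv, ← hxB]
end

section
/- Let ε ∈ [0,1), U ≥ 1, and A be the (U+1)×(U+1) matrix with A(i,j) = ε^|i-j|. Then eᵀ A⁻¹ e = (2 + (U-1)(1-ε)) / (1+ε), where e is the all-ones vector. -/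
lemma sum_row (n a : ℕ) (d x y : ℝ) (f : ℕ → ℝ) (ha : a < n) :
    ∑ m ∈ Finset.range n,
      ((if a = m then d else 0) + (if a + 1 = m then x else 0) + (if m + 1 = a then y else 0)) * f m
    = d * f a + (if a + 1 < n then x * f (a+1) else 0)
      + (if 1 ≤ a then y * f (a-1) else 0) := by
  simp only [add_mul, Finset.sum_add_distrib, ite_mul, zero_mul]
  congr 1
  · congr 1
    · rw [Finset.sum_ite_eq]
      simp [Finset.mem_range, ha]
    · rw [Finset.sum_ite_eq]
      simp [Finset.mem_range]
  · rcases a with _ | t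
    · simp
    · have : ∀ m, (m + 1 = t + 1) = (t + 1 - 1 = m) := by
        intro m; simp only [eq_iff_iff]; omega
      simp only [this]
      rw [Finset.sum_ite_eq]
      have ht : t + 1 - 1 ∈ Finset.range n := by
        simp only [Finset.mem_range]; omega
      simp [ht]
      intro h; omega

theorem stmt_2 (U : ℕ) (hU : 1 ≤ U) (ε : ℝ) (hε0 : 0 ≤ ε) (hε1 : ε < 1)
    (A : Matrix (Fin (U + 1)) (Fin (U + 1)) ℝ)
    (hA : ∀ i j, A i j = ε ^ ((i.val : ℤ) - (j.val : ℤ)).natAbs) :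
    dotProduct (fun _ : Fin (U + 1) => (1 : ℝ)) (A⁻¹.mulVec fun _ => 1) =
      (2 + ((U : ℝ) - 1) * (1 - ε)) / (1 + ε) := by
  have hd : (1:ℝ) - ε^2 ≠ 0 := by nlinarith
  have hp : (1:ℝ) + ε ≠ 0 := by nlinarith
  set B : Matrix (Fin (U+1)) (Fin (U+1)) ℝ := fun i j => (1 - ε^2)⁻¹ *
      (((if i.val = j.val then (if i.val = 0 ∨ i.val = U then (1:ℝ) else 1+ε^2) else 0)
       + (if i.val + 1 = j.val then -ε else 0) + (if j.val + 1 = i.val then -ε else 0))) with hB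
  have key : B * A = 1 := by
    ext i j
    rw [Matrix.mul_apply, Matrix.one_apply]
    simp only [hB, hA]
    simp only [mul_assoc]
    rw [← Finset.mul_sum]
    rw [Fin.sum_univ_eq_sum_range (fun m => ((if i.val = m then (if i.val = 0 ∨ i.val = U then (1:ℝ) else 1+ε^2) else 0)
       + (if i.val + 1 = m then -ε else 0) + (if m + 1 = i.val then -ε else 0)) * ε ^ ((m : ℤ) - (j.val : ℤ)).natAbs)]
    rw [sum_row (U+1) i.val _ (-ε) (-ε) _ i.isLt]
    have ha : i.val < U + 1 := i.isLt
    have hb : j.val < U + 1 := j.isLt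
    simp only [Fin.ext_iff]
    set a := i.val with haa
    set b := j.val with hbb
    clear_value a b
    rcases Nat.eq_zero_or_pos a with h0 | h1
    · -- a = 0
      subst h0
      simp only [if_pos (Or.inl rfl), if_pos (by omega : 0 + 1 < U + 1), if_neg (by omega : ¬ (1 ≤ 0))]
      rcases Nat.eq_zero_or_pos b with hb0 | hb1
      · subst hb0
        have e1 : (((0:ℕ) : ℤ) - ((0:ℕ):ℤ)).natAbs = 0 := by omega
        have e2 : (((0+1:ℕ) : ℤ) - ((0:ℕ):ℤ)).natAbs = 1 := by omega
        rw [e1, e2]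
        split_ifs <;> first | (exfalso; omega) | omega | tauto | (field_simp; ring) | ring

      · obtain ⟨t, rfl⟩ : ∃ t, b = t + 1 := ⟨b - 1, by omega⟩
        have e1 : (((0:ℕ) : ℤ) - ((t+1:ℕ):ℤ)).natAbs = t + 1 := by omega
        have e2 : (((0+1:ℕ) : ℤ) - ((t+1:ℕ):ℤ)).natAbs = t := by omega
        rw [e1, e2]
        split_ifs <;> first | (exfalso; omega) | omega | tauto | (field_simp; ring) | ring

    · rcases Nat.lt_or_ge a U with hmid | hend
      · -- 0 < a < U
        simp only [if_neg (by omega : ¬ (a = 0 ∨ a = U)), if_pos (by omega : a + 1 < U + 1),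
          if_pos h1]
        rcases Nat.lt_trichotomy a b with hab | hab | hab
        · obtain ⟨t, rfl⟩ : ∃ t, b = a + (t + 1) := ⟨b - a - 1, by omega⟩
          have e1 : ((a : ℤ) - ((a + (t+1) :ℕ):ℤ)).natAbs = t + 1 := by omega
          have e2 : (((a+1:ℕ) : ℤ) - ((a + (t+1):ℕ):ℤ)).natAbs = t := by omega
          have e3 : (((a-1:ℕ) : ℤ) - ((a + (t+1):ℕ):ℤ)).natAbs = t + 2 := by omega
          rw [e1, e2, e3]
          split_ifs <;> first | (exfalso; omega) | omega | tauto | (field_simp; ring) | ring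

        · subst hab
          have e1 : ((a : ℤ) - (a:ℤ)).natAbs = 0 := by omega
          have e2 : (((a+1:ℕ) : ℤ) - (a:ℤ)).natAbs = 1 := by omega
          have e3 : (((a-1:ℕ) : ℤ) - (a:ℤ)).natAbs = 1 := by omega
          rw [e1, e2, e3]
          split_ifs <;> first | (exfalso; omega) | omega | tauto | (field_simp; ring) | ring

        · obtain ⟨t, rfl⟩ : ∃ t, a = b + (t + 1) := ⟨a - b - 1, by omega⟩
          have e1 : (((b + (t+1) :ℕ): ℤ) - (b:ℤ)).natAbs = t + 1 := by omega
          have e2 : (((b + (t+1)+1:ℕ) : ℤ) - (b:ℤ)).natAbs = t + 2 := by omega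
          have e3 : (((b + (t+1)-1:ℕ) : ℤ) - (b:ℤ)).natAbs = t := by omega
          rw [e1, e2, e3]
          split_ifs <;> first | (exfalso; omega) | omega | tauto | (field_simp; ring) | ring

      · -- a = U
        have haU : a = U := by omega
        simp only [if_pos (Or.inr haU), if_neg (by omega : ¬ (a + 1 < U + 1)), if_pos h1]
        rcases Nat.lt_trichotomy a b with hab | hab | hab
        · omega
        · subst hab
          have e1 : ((a : ℤ) - (a:ℤ)).natAbs = 0 := by omega
          have e3 : (((a-1:ℕ) : ℤ) - (a:ℤ)).natAbs = 1 := by omega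
          rw [e1, e3]
          split_ifs <;> first | (exfalso; omega) | omega | tauto | (field_simp; ring) | ring

        · obtain ⟨t, rfl⟩ : ∃ t, a = b + (t + 1) := ⟨a - b - 1, by omega⟩
          have e1 : (((b + (t+1) :ℕ): ℤ) - (b:ℤ)).natAbs = t + 1 := by omega
          have e3 : (((b + (t+1)-1:ℕ) : ℤ) - (b:ℤ)).natAbs = t := by omega
          rw [e1, e3]
          split_ifs <;> first | (exfalso; omega) | omega | tauto | (field_simp; ring) | ring

  have hBinv : A⁻¹ = B := Matrix.inv_eq_left_inv key
  rw [hBinv]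
  simp only [dotProduct, Matrix.mulVec, one_mul, mul_one]
  -- inner sum : row sums of B
  have hrow : ∀ i : Fin (U+1), ∑ x : Fin (U+1), B i x =
      (1 - ε^2)⁻¹ * ((if i.val = 0 ∨ i.val = U then (1:ℝ) else 1+ε^2)
        + (if i.val + 1 < U + 1 then -ε else 0) + (if 1 ≤ i.val then -ε else 0)) := by
    intro i
    have h01 : ∑ x : Fin (U+1), B i x = ∑ x : Fin (U+1), B i x * 1 := by simp
    rw [h01]
    simp only [hB, mul_assoc]
    rw [← Finset.mul_sum]
    rw [Fin.sum_univ_eq_sum_range (fun m => ((if i.val = m then (if i.val = 0 ∨ i.val = U then (1:ℝ) else 1+ε^2) else 0)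
       + (if i.val + 1 = m then -ε else 0) + (if m + 1 = i.val then -ε else 0)) * 1)]
    rw [sum_row (U+1) i.val _ (-ε) (-ε) (fun _ => (1:ℝ)) i.isLt]
    simp
  simp only [hrow]
  rw [Fin.sum_univ_eq_sum_range (fun m => (1 - ε^2)⁻¹ * ((if m = 0 ∨ m = U then (1:ℝ) else 1+ε^2)
        + (if m + 1 < U + 1 then -ε else 0) + (if 1 ≤ m then -ε else 0)))]
  have hpt : ∀ m ∈ Finset.range (U+1),
      (1 - ε^2)⁻¹ * ((if m = 0 ∨ m = U then (1:ℝ) else 1+ε^2)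
        + (if m + 1 < U + 1 then -ε else 0) + (if 1 ≤ m then -ε else 0))
      = (1 - ε^2)⁻¹ * (1+ε^2-2*ε) + (if m = 0 then (1 - ε^2)⁻¹ * (ε - ε^2) else 0)
        + (if m = U then (1 - ε^2)⁻¹ * (ε - ε^2) else 0) := by
    intro m hm
    simp only [Finset.mem_range] at hm
    split_ifs <;> first | (exfalso; omega) | ring
  rw [Finset.sum_congr rfl hpt]
  simp only [Finset.sum_add_distrib, Finset.sum_const, Finset.card_range, nsmul_eq_mul]
  rw [Finset.sum_ite_eq' (Finset.range (U+1)) 0 (fun _ => (1 - ε^2)⁻¹ * (ε - ε^2)),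
    Finset.sum_ite_eq' (Finset.range (U+1)) U (fun _ => (1 - ε^2)⁻¹ * (ε - ε^2))]
  rw [if_pos (by simp), if_pos (by simp [Finset.mem_range])]
  have h1e : (1:ℝ) - ε^2 = (1+ε)*(1-ε) := by ring
  have h2 : (1:ℝ) - ε ≠ 0 := by nlinarith
  field_simp
  push_cast
  ring
end

section
/- Let ε ∈ [0,1), T > 0, U ≥ 1, and A the (U+1)×(U+1) matrix with A(i,j) = ε^|i-j|. The minimum of f(x) = (1/(2T)) xᵀ A x + 1/2 over all x ∈ ℝ^{U+1} with eᵀ x = T equals (T/2)·(1+ε)/(2 + (U-1)(1-ε)) + 1/2. -/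
lemma psd_aux (ε : ℝ) (hε0 : 0 ≤ ε) (hε1 : ε ≤ 1) :
    ∀ (n : ℕ) (y : Fin n → ℝ),
      (∑ i, ε ^ (n - 1 - i.val) * y i) ^ 2 ≤
        ∑ i, ∑ j, ε ^ (((i.val : ℤ) - (j.val : ℤ)).natAbs) * (y i * y j) := by
  intro n
  induction n with
  | zero => intro y; simp
  | succ n ih =>
    intro y
    have IH := ih (fun i => y i.castSucc)
    set t : ℝ := ∑ i : Fin n, ε ^ (n - 1 - i.val) * y i.castSucc with ht
    have hL : (∑ i : Fin (n+1), ε ^ (n + 1 - 1 - i.val) * y i) = ε * t + y (Fin.last n) := by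
      rw [Fin.sum_univ_castSucc]
      simp only [Fin.coe_castSucc, Fin.val_last, ht, Finset.mul_sum]
      congr 1
      · apply Finset.sum_congr rfl
        intro i _
        have hi : i.val < n := i.isLt
        have h : n + 1 - 1 - i.val = (n - 1 - i.val) + 1 := by omega
        rw [h, pow_succ]
        ring
      · simp
    rw [hL]
    have hc1 : (∑ i : Fin n, ε ^ (((i.castSucc.val : ℤ) - ((Fin.last n).val : ℤ)).natAbs)
        * (y i.castSucc * y (Fin.last n))) = ε * t * y (Fin.last n) := by
      rw [ht, Finset.mul_sum, Finset.sum_mul]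
      apply Finset.sum_congr rfl
      intro i _
      have hi : i.val < n := i.isLt
      have he : (((i.castSucc.val : ℤ) - ((Fin.last n).val : ℤ)).natAbs) = (n - 1 - i.val) + 1 := by
        simp only [Fin.coe_castSucc, Fin.val_last]
        omega
      rw [he, pow_succ]
      ring
    have hc2 : (∑ j : Fin n, ε ^ ((((Fin.last n).val : ℤ) - (j.castSucc.val : ℤ)).natAbs)
        * (y (Fin.last n) * y j.castSucc)) = ε * t * y (Fin.last n) := by
      rw [ht, Finset.mul_sum, Finset.sum_mul]
      apply Finset.sum_congr rfl
      intro j _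
      have hj : j.val < n := j.isLt
      have he : ((((Fin.last n).val : ℤ) - (j.castSucc.val : ℤ)).natAbs) = (n - 1 - j.val) + 1 := by
        simp only [Fin.coe_castSucc, Fin.val_last]
        omega
      rw [he, pow_succ]
      ring
    have hR : (∑ i : Fin (n+1), ∑ j : Fin (n+1),
        ε ^ (((i.val : ℤ) - (j.val : ℤ)).natAbs) * (y i * y j))
        = (∑ i : Fin n, ∑ j : Fin n,
            ε ^ (((i.val : ℤ) - (j.val : ℤ)).natAbs) * (y i.castSucc * y j.castSucc))
          + 2 * (ε * t) * y (Fin.last n) + y (Fin.last n) ^ 2 := by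
      simp only [Fin.sum_univ_castSucc]
      rw [Finset.sum_add_distrib, hc1, hc2]
      have hlast : ε ^ ((((Fin.last n).val : ℤ) - ((Fin.last n).val : ℤ)).natAbs)
          * (y (Fin.last n) * y (Fin.last n)) = y (Fin.last n) ^ 2 := by
        simp [sq]
      rw [hlast]
      have hq : (∑ i : Fin n, ∑ j : Fin n,
          ε ^ (((i.castSucc.val : ℤ) - (j.castSucc.val : ℤ)).natAbs)
            * (y i.castSucc * y j.castSucc))
          = (∑ i : Fin n, ∑ j : Fin n,
            ε ^ (((i.val : ℤ) - (j.val : ℤ)).natAbs) * (y i.castSucc * y j.castSucc)) := by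
        simp
      rw [hq]
      ring
    rw [hR]
    have hε2 : ε ^ 2 ≤ 1 := by nlinarith
    have ht2 : ε ^ 2 * t ^ 2 ≤ t ^ 2 := by nlinarith [sq_nonneg t]
    nlinarith [IH, ht2]

lemma geom_one_sub (ε : ℝ) (m : ℕ) :
    (1 - ε) * ∑ d ∈ Finset.range m, ε ^ d = 1 - ε ^ m := by
  have := geom_sum_mul ε m
  nlinarith [this]

lemma row_sum (U : ℕ) (ε : ℝ) (i : Fin (U + 1)) :
    ∑ j : Fin (U + 1), ε ^ (((i.val : ℤ) - (j.val : ℤ)).natAbs)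
      = (∑ d ∈ Finset.range (i.val + 1), ε ^ d)
        + ∑ d ∈ Finset.range (U - i.val), ε ^ (d + 1) := by
  rw [Fin.sum_univ_eq_sum_range (fun j => ε ^ (((i.val : ℤ) - (j : ℤ)).natAbs))]
  have key : ∑ j ∈ Finset.range (U + 1), ε ^ (((i.val : ℤ) - (j : ℤ)).natAbs)
      = (∑ j ∈ Finset.Ico 0 (i.val + 1), ε ^ (((i.val : ℤ) - (j : ℤ)).natAbs))
        + ∑ j ∈ Finset.Ico (i.val + 1) (U + 1), ε ^ (((i.val : ℤ) - (j : ℤ)).natAbs) := by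
    rw [Finset.sum_Ico_consecutive _ (Nat.zero_le (i.val + 1))
        (by omega : i.val + 1 ≤ U + 1)]
    rw [Finset.range_eq_Ico]
  rw [key]
  congr 1
  · rw [← Finset.range_eq_Ico]
    rw [← Finset.sum_range_reflect (fun d => ε ^ d) (i.val + 1)]
    apply Finset.sum_congr rfl
    intro j hj
    simp only [Finset.mem_range] at hj
    congr 1
    omega
  · rw [Finset.sum_Ico_eq_sum_range]
    have hc : U + 1 - (i.val + 1) = U - i.val := by omega
    rw [hc]
    apply Finset.sum_congr rfl
    intro d hd
    simp only [Finset.mem_range] at hd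
    congr 1
    omega

lemma mulVec_v (U : ℕ) (hU : 1 ≤ U) (ε : ℝ) (i : Fin (U + 1)) :
    ∑ j : Fin (U + 1), ε ^ (((i.val : ℤ) - (j.val : ℤ)).natAbs) *
      (if j.val = 0 ∨ j.val = U then 1 else 1 - ε) = 1 + ε := by
  have hsplit : ∀ j : Fin (U + 1),
      ε ^ (((i.val : ℤ) - (j.val : ℤ)).natAbs) *
        (if j.val = 0 ∨ j.val = U then 1 else 1 - ε)
      = ε ^ (((i.val : ℤ) - (j.val : ℤ)).natAbs) * (1 - ε)
        + (if j = (0 : Fin (U + 1)) then ε ^ (((i.val : ℤ) - (j.val : ℤ)).natAbs) * ε else 0)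
        + (if j = Fin.last U then ε ^ (((i.val : ℤ) - (j.val : ℤ)).natAbs) * ε else 0) := by
    intro j
    have h0 : (j = (0 : Fin (U + 1))) ↔ j.val = 0 := by
      constructor
      · intro h; rw [h]; rfl
      · intro h; exact Fin.ext h
    have hl : (j = Fin.last U) ↔ j.val = U := by
      constructor
      · intro h; rw [h]; rfl
      · intro h; exact Fin.ext h
    have hU0 : ¬ ((0:ℕ) = U) := by omega
    have hU0' : ¬ (U = 0) := by omega
    by_cases h1 : j.val = 0 <;> by_cases h2 : j.val = U <;>
      simp [h0, hl, h1, h2, hU0, hU0'] <;> first | omega | ring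
  rw [Finset.sum_congr rfl (fun j _ => hsplit j)]
  rw [Finset.sum_add_distrib, Finset.sum_add_distrib, Finset.sum_ite_eq' Finset.univ,
      Finset.sum_ite_eq' Finset.univ]
  simp only [Finset.mem_univ, if_true]
  have e0 : (((i.val : ℤ) - ((0 : Fin (U+1)).val : ℤ)).natAbs) = i.val := by
    simp
  have eU : (((i.val : ℤ) - ((Fin.last U).val : ℤ)).natAbs) = U - i.val := by
    simp only [Fin.val_last]
    have := i.isLt
    omega
  rw [e0, eU, ← Finset.sum_mul, row_sum]
  have g1 : (1 - ε) * ∑ d ∈ Finset.range (i.val + 1), ε ^ d = 1 - ε ^ (i.val + 1) :=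
    geom_one_sub ε (i.val + 1)
  have g2 : (1 - ε) * ∑ d ∈ Finset.range (U - i.val), ε ^ (d + 1)
      = ε * (1 - ε ^ (U - i.val)) := by
    have : ∑ d ∈ Finset.range (U - i.val), ε ^ (d + 1)
        = ε * ∑ d ∈ Finset.range (U - i.val), ε ^ d := by
      rw [Finset.mul_sum]
      apply Finset.sum_congr rfl
      intro d _
      rw [pow_succ]; ring
    rw [this]
    have hg := geom_one_sub ε (U - i.val)
    linear_combination ε * hg
  have hp1 : ε ^ i.val * ε = ε ^ (i.val + 1) := by rw [pow_succ]
  have hp2 : ε ^ (U - i.val) * ε = ε ^ (U - i.val + 1) := by rw [pow_succ]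
  linear_combination g1 + g2 + hp1

lemma sum_v (U : ℕ) (hU : 1 ≤ U) (ε : ℝ) :
    ∑ j : Fin (U + 1), (if j.val = 0 ∨ j.val = U then (1:ℝ) else 1 - ε)
      = 2 + ((U : ℝ) - 1) * (1 - ε) := by
  have hsplit : ∀ j : Fin (U + 1),
      (if j.val = 0 ∨ j.val = U then (1:ℝ) else 1 - ε)
      = (1 - ε) + (if j = (0 : Fin (U + 1)) then ε else 0)
        + (if j = Fin.last U then ε else 0) := by
    intro j
    have h0 : (j = (0 : Fin (U + 1))) ↔ j.val = 0 := by
      constructor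
      · intro h; rw [h]; rfl
      · intro h; exact Fin.ext h
    have hl : (j = Fin.last U) ↔ j.val = U := by
      constructor
      · intro h; rw [h]; rfl
      · intro h; exact Fin.ext h
    have hU0 : ¬ ((0:ℕ) = U) := by omega
    have hU0' : ¬ (U = 0) := by omega
    by_cases h1 : j.val = 0 <;> by_cases h2 : j.val = U <;>
      simp [h0, hl, h1, h2, hU0, hU0'] <;> first | omega | ring
  rw [Finset.sum_congr rfl (fun j _ => hsplit j)]
  rw [Finset.sum_add_distrib, Finset.sum_add_distrib, Finset.sum_ite_eq' Finset.univ,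
      Finset.sum_ite_eq' Finset.univ]
  simp only [Finset.mem_univ, if_true, Finset.sum_const, Finset.card_univ, Fintype.card_fin,
    nsmul_eq_mul]
  push_cast
  ring

theorem stmt_4 (U : ℕ) (hU : 1 ≤ U) (ε T : ℝ) (hε0 : 0 ≤ ε) (hε1 : ε < 1)
    (hT : 0 < T)
    (A : Matrix (Fin (U + 1)) (Fin (U + 1)) ℝ)
    (hA : ∀ i j, A i j = ε ^ ((i.val : ℤ) - (j.val : ℤ)).natAbs) :
    IsLeast {y : ℝ | ∃ x : Fin (U + 1) → ℝ, (∑ k, x k) = T ∧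
        y = 1 / (2 * T) * dotProduct x (A.mulVec x) + 1 / 2}
      ((T / 2) * (1 + ε) / (2 + ((U : ℝ) - 1) * (1 - ε)) + 1 / 2) := by
  set D : ℝ := 2 + ((U : ℝ) - 1) * (1 - ε) with hD
  have hU1 : (1:ℝ) ≤ (U:ℝ) := by exact_mod_cast hU
  have hDpos : 0 < D := by nlinarith
  set v : Fin (U + 1) → ℝ := fun j => if j.val = 0 ∨ j.val = U then 1 else 1 - ε with hv
  have hsumv : ∑ j, v j = D := sum_v U hU ε
  have hAv : ∀ i, (A.mulVec v) i = 1 + ε := by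
    intro i
    simp only [Matrix.mulVec, dotProduct]
    simp only [hA, hv]
    exact mulVec_v U hU ε i
  set xs : Fin (U + 1) → ℝ := fun j => (T / D) * v j with hxs
  have hsumxs : ∑ k, xs k = T := by
    simp only [hxs, ← Finset.mul_sum, hsumv]
    field_simp
  have hAxs : ∀ i, (A.mulVec xs) i = (T / D) * (1 + ε) := by
    intro i
    have : (A.mulVec xs) i = (T / D) * (A.mulVec v) i := by
      simp only [Matrix.mulVec, dotProduct, hxs, Finset.mul_sum]
      apply Finset.sum_congr rfl
      intro j _
      ring
    rw [this, hAv]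
  have hdotxs : dotProduct xs (A.mulVec xs) = T ^ 2 * (1 + ε) / D := by
    simp only [dotProduct]
    rw [Finset.sum_congr rfl (fun i _ => by rw [hAxs i])]
    rw [← Finset.sum_mul, hsumxs]
    field_simp
  have hval : 1 / (2 * T) * (T ^ 2 * (1 + ε) / D) + 1 / 2
      = T / 2 * (1 + ε) / D + 1 / 2 := by
    field_simp
  constructor
  · exact ⟨xs, hsumxs, by rw [hdotxs, hval]⟩
  · rintro y ⟨x, hx, rfl⟩
    set z : Fin (U + 1) → ℝ := fun j => x j - xs j with hz
    have hsumz : ∑ k, z k = 0 := by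
      simp only [hz, Finset.sum_sub_distrib, hx, hsumxs, sub_self]
    have hzA : 0 ≤ dotProduct z (A.mulVec z) := by
      have h1 := psd_aux ε hε0 (le_of_lt hε1) (U + 1) z
      have h2 : dotProduct z (A.mulVec z)
          = ∑ i, ∑ j, ε ^ (((i.val : ℤ) - (j.val : ℤ)).natAbs) * (z i * z j) := by
        simp only [dotProduct, Matrix.mulVec, Finset.mul_sum]
        apply Finset.sum_congr rfl
        intro i _
        apply Finset.sum_congr rfl
        intro j _
        rw [hA]
        ring
      rw [h2]
      exact le_trans (sq_nonneg _) h1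
    have hsym : ∀ i j, A i j = A j i := by
      intro i j
      rw [hA, hA]
      congr 1
      omega
    have hcross : dotProduct z (A.mulVec xs) = 0 := by
      have : dotProduct z (A.mulVec xs) = ∑ i, z i * ((T / D) * (1 + ε)) := by
        simp only [dotProduct]
        apply Finset.sum_congr rfl
        intro i _
        rw [hAxs i]
      rw [this, ← Finset.sum_mul, hsumz, zero_mul]
    have hcross' : dotProduct xs (A.mulVec z) = 0 := by
      have hswap : dotProduct xs (A.mulVec z) = dotProduct z (A.mulVec xs) := by
        simp only [dotProduct, Matrix.mulVec, Finset.mul_sum]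
        rw [Finset.sum_comm]
        apply Finset.sum_congr rfl
        intro i _
        apply Finset.sum_congr rfl
        intro j _
        rw [hsym j i]
        ring
      rw [hswap, hcross]
    have hdecomp : dotProduct x (A.mulVec x)
        = dotProduct xs (A.mulVec xs) + dotProduct xs (A.mulVec z)
          + dotProduct z (A.mulVec xs) + dotProduct z (A.mulVec z) := by
      have hxz : x = fun j => xs j + z j := by
        funext j
        simp [hz]
      rw [hxz]
      simp only [dotProduct, Matrix.mulVec, Finset.mul_sum]
      rw [← Finset.sum_add_distrib, ← Finset.sum_add_distrib, ← Finset.sum_add_distrib]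
      apply Finset.sum_congr rfl
      intro i _
      rw [← Finset.sum_add_distrib, ← Finset.sum_add_distrib, ← Finset.sum_add_distrib]
      apply Finset.sum_congr rfl
      intro j _
      ring
    have hge : T ^ 2 * (1 + ε) / D ≤ dotProduct x (A.mulVec x) := by
      rw [hdecomp, hdotxs, hcross, hcross']
      linarith
    have h2T : 0 < 1 / (2 * T) := by positivity
    calc T / 2 * (1 + ε) / D + 1 / 2
        = 1 / (2 * T) * (T ^ 2 * (1 + ε) / D) + 1 / 2 := hval.symm
      _ ≤ 1 / (2 * T) * dotProduct x (A.mulVec x) + 1 / 2 := by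
          have := mul_le_mul_of_nonneg_left hge (le_of_lt h2T)
          linarith
end

section
/- Let ε ∈ [0,1), T > 0, U ≥ 1. The unique minimizer x* of f(x) = (1/(2T)) xᵀ A x over {x : eᵀ x = T} (with A(i,j) = ε^|i-j|) is given by x*(1) = x*(U+1) = T / (2 + (U-1)(1-ε)) and x*(k) = T(1-ε) / (2 + (U-1)(1-ε)) for 2 ≤ k ≤ U. -/
open Finset

private lemma geo_aux (ε : ℝ) (n : ℕ) :
    (1 - ε) * ∑ j ∈ range n, ε ^ j = 1 - ε ^ n := by
  linear_combination -geom_sum_mul ε n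

private lemma abs_sum_eq (ε : ℝ) (U i : ℕ) (hi : i ≤ U) :
    (1 - ε) * ∑ j ∈ range (U + 1), ε ^ ((i : ℤ) - (j : ℤ)).natAbs
      = 1 + ε - ε ^ (i + 1) - ε ^ (U - i + 1) := by
  have hsplit : ∑ j ∈ range (U + 1), ε ^ ((i : ℤ) - (j : ℤ)).natAbs
      = (∑ j ∈ range (i + 1), ε ^ j) + ε * ∑ j ∈ range (U - i), ε ^ j := by
    rw [range_eq_Ico, ← Finset.sum_Ico_consecutive _ (Nat.zero_le (i+1))
      (by omega : i + 1 ≤ U + 1)]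
    simp only [← range_eq_Ico]
    congr 1
    · rw [← Finset.sum_range_reflect (fun j => ε ^ j) (i+1)]
      refine Finset.sum_congr rfl fun j hj => ?_
      have hj' : j ≤ i := by simpa [Nat.lt_succ_iff] using hj
      congr 1
      omega
    · rw [Finset.sum_Ico_eq_sum_range]
      have h1 : U + 1 - (i+1) = U - i := by omega
      rw [h1, Finset.mul_sum]
      refine Finset.sum_congr rfl fun j hj => ?_
      have h2 : ((i:ℤ) - ((i + 1 + j : ℕ) : ℤ)).natAbs = j + 1 := by push_cast; omega
      rw [h2, pow_succ]
      ring
  rw [hsplit]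
  have h1 := geo_aux ε (i+1)
  have h2 := geo_aux ε (U - i)
  linear_combination h1 + ε * h2

private lemma key_sum (ε : ℝ) (U : ℕ) (hU : 1 ≤ U) (i : ℕ) (hi : i ≤ U) :
    (1 - ε) * ∑ j ∈ range (U + 1), ε ^ ((i : ℤ) - (j : ℤ)).natAbs *
      (if j = 0 ∨ j = U then (1:ℝ) else 1 - ε) = (1 - ε) * (1 + ε) := by
  have hterm : ∀ j ∈ range (U + 1),
      ε ^ ((i : ℤ) - (j : ℤ)).natAbs * (if j = 0 ∨ j = U then (1:ℝ) else 1 - ε)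
      = (1 - ε) * ε ^ ((i : ℤ) - (j : ℤ)).natAbs
        + ((if j = 0 then ε * ε ^ i else 0) + (if j = U then ε * ε ^ (U - i) else 0)) := by
    intro j hj
    by_cases h0 : j = 0
    · have h1 : ((i : ℤ) - (j : ℤ)).natAbs = i := by omega
      have h2 : ¬ j = U := by omega
      rw [if_pos (Or.inl h0), if_pos h0, if_neg h2, h1]
      ring
    · by_cases hUj : j = U
      · have h1 : ((i : ℤ) - (j : ℤ)).natAbs = U - i := by omega
        rw [if_pos (Or.inr hUj), if_neg h0, if_pos hUj, h1]
        ring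
      · rw [if_neg (by tauto), if_neg h0, if_neg hUj]
        ring
  rw [Finset.sum_congr rfl hterm, Finset.sum_add_distrib, Finset.sum_add_distrib,
    ← Finset.mul_sum]
  have hz : ∑ j ∈ range (U + 1), (if j = 0 then ε * ε ^ i else 0) = ε * ε ^ i := by
    rw [Finset.sum_ite_eq' (range (U+1)) 0 (fun _ => ε * ε ^ i)]
    simp
  have hu : ∑ j ∈ range (U + 1), (if j = U then ε * ε ^ (U - i) else 0) = ε * ε ^ (U - i) := by
    rw [Finset.sum_ite_eq' (range (U+1)) U (fun _ => ε * ε ^ (U - i))]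
    simp
  rw [hz, hu]
  linear_combination (1 - ε) * abs_sum_eq ε U i hi

private def sfun (ε : ℝ) (v : ℕ → ℝ) (n : ℕ) : ℝ := ∑ j ∈ range (n + 1), ε ^ (n - j) * v j

private lemma sfun_zero (ε : ℝ) (v : ℕ → ℝ) : sfun ε v 0 = v 0 := by simp [sfun]

private lemma sfun_succ (ε : ℝ) (v : ℕ → ℝ) (n : ℕ) :
    sfun ε v (n + 1) = ε * sfun ε v n + v (n + 1) := by
  unfold sfun
  rw [Finset.sum_range_succ, Finset.mul_sum]
  congr 1
  · refine Finset.sum_congr rfl fun j hj => ?_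
    have hj' : j ≤ n := by simpa [Nat.lt_succ_iff] using hj
    have h1 : n + 1 - j = (n - j) + 1 := by omega
    rw [h1, pow_succ]
    ring
  · simp

private lemma quad_eq (ε : ℝ) (v : ℕ → ℝ) (n : ℕ) :
    ∑ i ∈ range (n + 1), ∑ j ∈ range (n + 1), ε ^ ((i:ℤ) - (j:ℤ)).natAbs * (v i * v j)
      = sfun ε v n ^ 2 + (1 - ε ^ 2) * ∑ j ∈ range n, sfun ε v j ^ 2 := by
  induction n with
  | zero =>
    unfold sfun
    simp
    ring
  | succ n ih =>
    have hc : ∀ w : ℕ → ℝ, ∑ i ∈ range (n + 1), ε ^ (((i:ℤ) - ((n + 1 : ℕ):ℤ)).natAbs) * w i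
        = ε * ∑ i ∈ range (n + 1), ε ^ (n - i) * w i := by
      intro w
      rw [Finset.mul_sum]
      refine Finset.sum_congr rfl fun i hi => ?_
      have hi' : i ≤ n := by simpa [Nat.lt_succ_iff] using hi
      have h1 : ((i:ℤ) - ((n + 1 : ℕ):ℤ)).natAbs = (n - i) + 1 := by push_cast; omega
      rw [h1, pow_succ]
      ring
    rw [Finset.sum_range_succ]
    rw [Finset.sum_congr rfl (fun (i : ℕ) _ =>
      Finset.sum_range_succ (fun j => ε ^ ((i:ℤ) - (j:ℤ)).natAbs * (v i * v j)) (n+1))]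
    rw [Finset.sum_add_distrib, ih]
    have hcol : ∑ i ∈ range (n + 1), ε ^ (((i:ℤ) - ((n + 1 : ℕ):ℤ)).natAbs) * (v i * v (n + 1))
        = ε * sfun ε v n * v (n + 1) := by
      rw [hc (fun i => v i * v (n + 1))]
      unfold sfun
      rw [Finset.mul_sum, Finset.mul_sum, Finset.sum_mul]
      exact Finset.sum_congr rfl fun i _ => by ring
    have hrow : ∑ j ∈ range (n + 1 + 1), ε ^ ((((n + 1 : ℕ)):ℤ) - (j:ℤ)).natAbs * (v (n + 1) * v j)
        = ε * sfun ε v n * v (n + 1) + v (n + 1) * v (n + 1) := by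
      rw [Finset.sum_range_succ]
      congr 1
      · have hstep : ∀ j ∈ range (n + 1),
            ε ^ ((((n + 1 : ℕ)):ℤ) - (j:ℤ)).natAbs * (v (n + 1) * v j)
            = ε ^ (((j:ℤ) - ((n + 1 : ℕ):ℤ)).natAbs) * (v j * v (n + 1)) := by
          intro j hj
          have h1 : ((((n + 1 : ℕ)):ℤ) - (j:ℤ)).natAbs = (((j:ℤ) - ((n + 1 : ℕ):ℤ)).natAbs) := by
            omega
          rw [h1]
          ring
        rw [Finset.sum_congr rfl hstep, hcol]
      · simp
    rw [hcol, hrow, Finset.sum_range_succ (fun j => sfun ε v j ^ 2), sfun_succ]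
    ring

private lemma quad_pos (ε : ℝ) (hε0 : 0 ≤ ε) (hε1 : ε < 1) (v : ℕ → ℝ) (n i0 : ℕ)
    (hi0 : i0 ≤ n) (hv : v i0 ≠ 0) :
    0 < ∑ i ∈ range (n + 1), ∑ j ∈ range (n + 1), ε ^ ((i:ℤ) - (j:ℤ)).natAbs * (v i * v j) := by
  rw [quad_eq]
  have hε2 : 0 < 1 - ε ^ 2 := by nlinarith
  have hnn : 0 ≤ ∑ j ∈ range n, sfun ε v j ^ 2 :=
    Finset.sum_nonneg fun j _ => sq_nonneg _
  rcases lt_or_ge 0 (sfun ε v n ^ 2 + (1 - ε ^ 2) * ∑ j ∈ range n, sfun ε v j ^ 2) with h | h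
  · exact h
  · exfalso
    have h1 : sfun ε v n ^ 2 = 0 ∧ ∑ j ∈ range n, sfun ε v j ^ 2 = 0 := by
      constructor <;> nlinarith [sq_nonneg (sfun ε v n)]
    have hs : ∀ j ≤ n, sfun ε v j = 0 := by
      intro j hj
      rcases eq_or_lt_of_le hj with rfl | hj'
      · exact pow_eq_zero_iff (two_ne_zero) |>.mp h1.1
      · have := (Finset.sum_eq_zero_iff_of_nonneg (fun j _ => sq_nonneg (sfun ε v j))).mp
          h1.2 j (Finset.mem_range.mpr hj')
        exact pow_eq_zero_iff (two_ne_zero) |>.mp this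
    have hv0 : ∀ j ≤ n, v j = 0 := by
      intro j hj
      match j with
      | 0 => rw [← sfun_zero ε v]; exact hs 0 (Nat.zero_le n)
      | Nat.succ k =>
        have h2 := hs (k + 1) hj
        have h3 := hs k (by omega)
        rw [sfun_succ, h3] at h2
        linarith [h2]
    exact hv (hv0 i0 hi0)

theorem stmt_5 (U : ℕ) (hU : 1 ≤ U) (ε T : ℝ) (hε0 : 0 ≤ ε) (hε1 : ε < 1)
    (hT : 0 < T)
    (A : Matrix (Fin (U + 1)) (Fin (U + 1)) ℝ)
    (hA : ∀ i j, A i j = ε ^ ((i.val : ℤ) - (j.val : ℤ)).natAbs)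
    (xstar : Fin (U + 1) → ℝ)
    (hxstar : ∀ k : Fin (U + 1),
      xstar k = if k = 0 ∨ k = Fin.last U then T / (2 + ((U : ℝ) - 1) * (1 - ε))
        else T * (1 - ε) / (2 + ((U : ℝ) - 1) * (1 - ε))) :
    (∑ k, xstar k) = T ∧
      ∀ x : Fin (U + 1) → ℝ, (∑ k, x k) = T → x ≠ xstar →
        1 / (2 * T) * dotProduct xstar (A.mulVec xstar) <
          1 / (2 * T) * dotProduct x (A.mulVec x) := by
  have hUR : (1:ℝ) ≤ (U:ℝ) := by exact_mod_cast hU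
  set D : ℝ := 2 + ((U:ℝ) - 1) * (1 - ε) with hDdef
  have hD : 0 < D := by nlinarith
  have hone : (1:ℝ) - ε ≠ 0 := by linarith
  have h0last : (0 : Fin (U + 1)) ≠ Fin.last U := by
    intro h
    have := congrArg Fin.val h
    simp [Fin.last] at this
    omega
  -- pointwise decomposition of xstar
  have hsplit : ∀ k : Fin (U + 1), xstar k
      = T * (1 - ε) / D + ((if k = 0 then T / D - T * (1 - ε) / D else 0)
        + (if k = Fin.last U then T / D - T * (1 - ε) / D else 0)) := by
    intro k
    rw [hxstar k]
    by_cases h0 : k = 0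
    · have h2 : ¬ k = Fin.last U := by rw [h0]; exact h0last
      rw [if_pos (Or.inl h0), if_pos h0, if_neg h2]
      ring
    · by_cases hl : k = Fin.last U
      · rw [if_pos (Or.inr hl), if_neg h0, if_pos hl]
        ring
      · rw [if_neg (by tauto), if_neg h0, if_neg hl]
        ring
  have hsum1 : ∑ k, xstar k = T := by
    rw [Finset.sum_congr rfl fun k _ => hsplit k]
    rw [Finset.sum_add_distrib, Finset.sum_add_distrib, Finset.sum_const]
    rw [Finset.sum_ite_eq' Finset.univ (0 : Fin (U+1)) (fun _ => T / D - T * (1 - ε) / D)]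
    rw [Finset.sum_ite_eq' Finset.univ (Fin.last U) (fun _ => T / D - T * (1 - ε) / D)]
    simp only [Finset.mem_univ, if_true, Finset.card_univ, Fintype.card_fin, nsmul_eq_mul]
    push_cast
    field_simp
    ring
  refine ⟨hsum1, ?_⟩
  -- mulVec of xstar is constant
  have hmulvec : ∀ i : Fin (U + 1), A.mulVec xstar i = T / D * (1 + ε) := by
    intro i
    have h1 : A.mulVec xstar i = ∑ j : Fin (U + 1),
        ε ^ ((i.val : ℤ) - (j.val : ℤ)).natAbs *
          (T / D * (if j.val = 0 ∨ j.val = U then 1 else 1 - ε)) := by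
      simp only [Matrix.mulVec, dotProduct]
      refine Finset.sum_congr rfl fun j _ => ?_
      rw [hA, hxstar]
      have hcond : (j = 0 ∨ j = Fin.last U) ↔ (j.val = 0 ∨ j.val = U) := by
        rw [Fin.ext_iff, Fin.ext_iff, Fin.val_last, Fin.val_zero]
      by_cases h : j.val = 0 ∨ j.val = U
      · rw [if_pos (hcond.mpr h), if_pos h]
        ring
      · rw [if_neg (fun hc => h (hcond.mp hc)), if_neg h]
        ring
    rw [h1]
    have h2 : ∑ j : Fin (U + 1), ε ^ ((i.val : ℤ) - (j.val : ℤ)).natAbs *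
          (T / D * (if j.val = 0 ∨ j.val = U then 1 else 1 - ε))
        = T / D * ∑ j ∈ range (U + 1), ε ^ ((i.val : ℤ) - (j : ℤ)).natAbs *
          (if j = 0 ∨ j = U then (1:ℝ) else 1 - ε) := by
      rw [Finset.mul_sum,
        ← Fin.sum_univ_eq_sum_range (fun j => T / D * (ε ^ ((i.val : ℤ) - (j : ℤ)).natAbs *
          (if j = 0 ∨ j = U then (1:ℝ) else 1 - ε))) (U + 1)]
      exact Finset.sum_congr rfl fun j _ => by ring
    rw [h2]
    have h3 := key_sum ε U hU i.val (by omega : i.val ≤ U)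
    have h4 : ∑ j ∈ range (U + 1), ε ^ ((i.val : ℤ) - (j : ℤ)).natAbs *
        (if j = 0 ∨ j = U then (1:ℝ) else 1 - ε) = 1 + ε := mul_left_cancel₀ hone h3
    rw [h4]
  -- symmetry of the quadratic form
  have hsymm : ∀ u w : Fin (U + 1) → ℝ,
      dotProduct u (A.mulVec w) = dotProduct w (A.mulVec u) := by
    intro u w
    simp only [dotProduct, Matrix.mulVec, Finset.mul_sum]
    rw [Finset.sum_comm]
    refine Finset.sum_congr rfl fun i _ => Finset.sum_congr rfl fun j _ => ?_
    rw [hA, hA]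
    have h5 : ((j.val : ℤ) - (i.val : ℤ)).natAbs = ((i.val : ℤ) - (j.val : ℤ)).natAbs := by
      omega
    rw [h5]
    ring
  intro x hx hne
  set d : Fin (U + 1) → ℝ := fun k => x k - xstar k with hd
  have hxeq : x = xstar + d := by
    funext k
    simp [hd]
  have hdsum : ∑ k, d k = 0 := by
    simp only [hd, Finset.sum_sub_distrib, hx, hsum1, sub_self]
  have hdd : 0 < dotProduct d (A.mulVec d) := by
    obtain ⟨k, hk⟩ : ∃ k, d k ≠ 0 := by
      by_contra h
      push_neg at h
      apply hne
      funext k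
      have := h k
      simp only [hd] at this
      linarith
    set v : ℕ → ℝ := fun m => if h : m < U + 1 then d ⟨m, h⟩ else 0 with hv
    have hveq : ∀ j : Fin (U + 1), v j.val = d j := by
      intro j
      simp only [hv, j.isLt, dif_pos, Fin.eta]
    have hQ : dotProduct d (A.mulVec d)
        = ∑ i ∈ range (U + 1), ∑ j ∈ range (U + 1),
            ε ^ ((i:ℤ) - (j:ℤ)).natAbs * (v i * v j) := by
      simp only [dotProduct, Matrix.mulVec, Finset.mul_sum]
      rw [← Fin.sum_univ_eq_sum_range (fun i => ∑ j ∈ range (U + 1),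
        ε ^ ((i:ℤ) - (j:ℤ)).natAbs * (v i * v j)) (U + 1)]
      refine Finset.sum_congr rfl fun i _ => ?_
      rw [← Fin.sum_univ_eq_sum_range (fun j => ε ^ (((i.val:ℕ):ℤ) - (j:ℤ)).natAbs *
        (v i.val * v j)) (U + 1)]
      refine Finset.sum_congr rfl fun j _ => ?_
      rw [hA, hveq, hveq]
      ring
    rw [hQ]
    exact quad_pos ε hε0 hε1 v U k.val (by omega) (by rw [hveq k]; exact hk)
  have hcross : dotProduct d (A.mulVec xstar) = 0 := by
    have h6 : dotProduct d (A.mulVec xstar) = ∑ k, d k * (T / D * (1 + ε)) := by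
      simp only [dotProduct]
      exact Finset.sum_congr rfl fun k _ => by rw [hmulvec k]
    rw [h6, ← Finset.sum_mul, hdsum, zero_mul]
  have hexp : dotProduct x (A.mulVec x)
      = dotProduct xstar (A.mulVec xstar) + dotProduct d (A.mulVec d) := by
    rw [hxeq, Matrix.mulVec_add, add_dotProduct, dotProduct_add,
      dotProduct_add, hsymm xstar d, hcross]
    ring
  have h2T : 0 < 1 / (2 * T) := by positivity
  calc 1 / (2 * T) * dotProduct xstar (A.mulVec xstar)
      < 1 / (2 * T) * (dotProduct xstar (A.mulVec xstar)
          + dotProduct d (A.mulVec d)) := by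
        apply mul_lt_mul_of_pos_left (by linarith) h2T
    _ = 1 / (2 * T) * dotProduct x (A.mulVec x) := by rw [hexp]
end

section
/- Let N ≥ 1, and for each n let α_n > 0, ε_n ∈ [0,1) with ∑ α_n = 1, and let ρ > 0. The minimum of ∑_n α_n ((1+ε_n)/(2ρ_n(1-ε_n)) + 1/2) over ρ_n > 0 with ∑_n ρ_n ≤ ρ is attained at ρ_n* = ρ·√(α_n(1+ε_n)/(1-ε_n)) / ∑_{n'} √(α_{n'}(1+ε_{n'})/(1-ε_{n'})), and the minimum value is (1/(2ρ))·(∑_n √(α_n(1+ε_n)/(1-ε_n)))² + 1/2. -/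
theorem stmt_8 (N : ℕ) (hN : 1 ≤ N) (α ε : Fin N → ℝ)
    (hα : ∀ n, 0 < α n) (hsum : ∑ n, α n = 1)
    (hε0 : ∀ n, 0 ≤ ε n) (hε1 : ∀ n, ε n < 1)
    (ρ : ℝ) (hρ : 0 < ρ)
    (S : ℝ) (hS : S = ∑ n, Real.sqrt (α n * (1 + ε n) / (1 - ε n)))
    (ρstar : Fin N → ℝ)
    (hρstar : ∀ n, ρstar n = ρ * Real.sqrt (α n * (1 + ε n) / (1 - ε n)) / S) :
    (∀ n, 0 < ρstar n) ∧ (∑ n, ρstar n ≤ ρ) ∧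
      (∑ n, α n * ((1 + ε n) / (2 * ρstar n * (1 - ε n)) + 1 / 2) =
        1 / (2 * ρ) * S ^ 2 + 1 / 2) ∧
      ∀ r : Fin N → ℝ, (∀ n, 0 < r n) → (∑ n, r n ≤ ρ) →
        1 / (2 * ρ) * S ^ 2 + 1 / 2 ≤
          ∑ n, α n * ((1 + ε n) / (2 * r n * (1 - ε n)) + 1 / 2) := by
  have hεp : ∀ n, (0:ℝ) < 1 + ε n := fun n => by linarith [hε0 n]
  have hεm : ∀ n, (0:ℝ) < 1 - ε n := fun n => by linarith [hε1 n]
  set s : Fin N → ℝ := fun n => Real.sqrt (α n * (1 + ε n) / (1 - ε n)) with hsdef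
  have hpos : ∀ n, 0 < α n * (1 + ε n) / (1 - ε n) := fun n =>
    div_pos (mul_pos (hα n) (hεp n)) (hεm n)
  have hs : ∀ n, 0 < s n := fun n => Real.sqrt_pos.mpr (hpos n)
  have hs2 : ∀ n, s n ^ 2 = α n * (1 + ε n) / (1 - ε n) := fun n => Real.sq_sqrt (hpos n).le
  have hne : Nonempty (Fin N) := ⟨⟨0, hN⟩⟩
  have hSpos : 0 < S := by
    rw [hS]; exact Finset.sum_pos (fun n _ => hs n) Finset.univ_nonempty
  -- objective rewrite
  have hobj : ∀ (r : Fin N → ℝ), (∀ n, 0 < r n) →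
      ∑ n, α n * ((1 + ε n) / (2 * r n * (1 - ε n)) + 1 / 2) =
      (∑ n, s n ^ 2 / r n) / 2 + 1 / 2 := by
    intro r hr
    have hterm : ∀ n, α n * ((1 + ε n) / (2 * r n * (1 - ε n)) + 1 / 2)
        = s n ^ 2 / r n / 2 + α n / 2 := by
      intro n
      rw [hs2 n]
      have h1 : (r n) ≠ 0 := (hr n).ne'
      have h2 : (1 - ε n) ≠ 0 := (hεm n).ne'
      field_simp
    rw [Finset.sum_congr rfl (fun n _ => hterm n), Finset.sum_add_distrib,
      ← Finset.sum_div, ← Finset.sum_div, hsum]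
  have hρstarpos : ∀ n, 0 < ρstar n := fun n => by
    rw [hρstar n]; exact div_pos (mul_pos hρ (hs n)) hSpos
  have hsumρstar : ∑ n, ρstar n = ρ := by
    have h1 : ∑ n, ρstar n = ∑ n, ρ * s n / S := Finset.sum_congr rfl fun n _ => hρstar n
    rw [h1, ← Finset.sum_div, ← Finset.mul_sum, ← hS, mul_div_assoc, div_self hSpos.ne', mul_one]
  refine ⟨hρstarpos, le_of_eq hsumρstar, ?_, ?_⟩
  · rw [hobj ρstar hρstarpos]
    have : ∑ n, s n ^ 2 / ρstar n = S ^ 2 / ρ := by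
      have h : ∀ n, s n ^ 2 / ρstar n = s n * S / ρ := by
        intro n
        rw [hρstar n]
        have := (hs n).ne'
        change s n ^ 2 / (ρ * s n / S) = s n * S / ρ
        field_simp
      rw [Finset.sum_congr rfl (fun n _ => h n), ← Finset.sum_div, ← Finset.sum_mul,
        ← hS, sq]
    rw [this]
    field_simp
  · intro r hr hrρ
    rw [hobj r hr]
    have hcs : S ^ 2 ≤ (∑ n, r n) * (∑ n, s n ^ 2 / r n) := by
      have key : (∑ n, Real.sqrt (r n) * (s n / Real.sqrt (r n))) ^ 2
          ≤ (∑ n, Real.sqrt (r n) ^ 2) * ∑ n, (s n / Real.sqrt (r n)) ^ 2 :=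
        Finset.sum_mul_sq_le_sq_mul_sq _ _ _
      have e1 : ∀ n, Real.sqrt (r n) * (s n / Real.sqrt (r n)) = s n := fun n =>
        mul_div_cancel₀ _ (Real.sqrt_pos.mpr (hr n)).ne'
      have e2 : ∀ n, Real.sqrt (r n) ^ 2 = r n := fun n => Real.sq_sqrt (hr n).le
      have e3 : ∀ n, (s n / Real.sqrt (r n)) ^ 2 = s n ^ 2 / r n := fun n => by
        rw [div_pow, e2 n]
      calc S ^ 2 = (∑ n, Real.sqrt (r n) * (s n / Real.sqrt (r n))) ^ 2 := by
            rw [Finset.sum_congr rfl fun n _ => e1 n, ← hS]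
        _ ≤ (∑ n, Real.sqrt (r n) ^ 2) * ∑ n, (s n / Real.sqrt (r n)) ^ 2 := key
        _ = (∑ n, r n) * (∑ n, s n ^ 2 / r n) := by
            rw [Finset.sum_congr rfl fun n _ => e2 n,
              Finset.sum_congr rfl fun n _ => e3 n]
    have hq : 0 ≤ ∑ n, s n ^ 2 / r n :=
      Finset.sum_nonneg fun n _ => div_nonneg (sq_nonneg _) (hr n).le
    have : S ^ 2 ≤ ρ * ∑ n, s n ^ 2 / r n :=
      hcs.trans (mul_le_mul_of_nonneg_right hrρ hq)
    have h2 : 1 / (2 * ρ) * S ^ 2 ≤ (∑ n, s n ^ 2 / r n) / 2 := by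
      rw [one_div, inv_mul_eq_div, div_le_div_iff₀ (by positivity) (by norm_num : (0:ℝ) < 2)]
      nlinarith
    linarith
end
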